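/- arXiv:2202.06644 — 2 statements merged into one kernel-verified Lean document; each statement's English description precedes it below -/
import Mathlib

section
/- Let N be an m-rooted network on X with m ≥ 2, and let S = {s₁, …, s_m} be a set of m colors. Then N is proper forest-based if and only if there exists an omni-extension Γ'(N) of Γ(N) and a proper vertex coloring σ: RH(N) → S of Γ'(N) such that (C1) the restriction of σ to the roots R(N) is a bijection onto S, and (C2) for all roots u and hybrid vertices v with σ(u) = σ(v), there exists a directed path P in N from u to v such that σ(w) = σ(u) for every hybrid vertex w on P. -/
/-!
A base forest with as many trees as `N` has roots has every root of `N` as the root of one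
of its trees, and coloring each vertex by the root of its tree gives the coloring: a hybrid
vertex is entered by exactly one forest arc, so its two parents lie in different trees, and
the other parent of the forest child of an omnian lies in a different tree as well.

Conversely, from `σ` keep every tree arc and, into each hybrid vertex `h`, the arc from the
parent `p` with `σ(γ_p) = σ(h)`. Condition (C2) provides such a parent, properness on `Γ(N)`
makes it unique and the omni-extension keeps omnians from becoming leaves. Since `σ ∘ γ` is
constant along the kept arcs, every dropped arc joins two different trees.
-/

open Classical

noncomputable def outdeg {V : Type*} (A : V → V → Prop) (v : V) : ℕ := {u | A v u}.ncard
noncomputable def indeg {V : Type*} (A : V → V → Prop) (v : V) : ℕ := {u | A u v}.ncard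

def Acyclic {V : Type*} (A : V → V → Prop) : Prop := ∀ v : V, ¬ Relation.TransGen A v v

def undirConn {V : Type*} (A : V → V → Prop) : Prop :=
  ∀ u v : V, Relation.ReflTransGen (fun a b => A a b ∨ A b a) u v

/-- A (multiply rooted) network with leaf set `X`: a semi-binary, connected DAG in which
the leaves (vertices of outdegree 0) are exactly `X` and every root has outdegree ≥ 2. -/
structure IsNetwork {V : Type*} (A : V → V → Prop) (X : Set V) : Prop where
  acyclic : Acyclic A
  conn : undirConn A
  leaves : ∀ v, outdeg A v = 0 ↔ v ∈ X
  roots2 : ∀ v, indeg A v = 0 → 2 ≤ outdeg A v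
  semibinary : ∀ v, 2 ≤ indeg A v → indeg A v = 2 ∧ outdeg A v = 1

/-- A (rooted) forest: every vertex has indegree at most one, and there are no directed cycles. -/
def IsForest {V : Type*} (F : V → V → Prop) : Prop := (∀ v, indeg F v ≤ 1) ∧ Acyclic F

/-- Two vertices lie in the same tree (connected component) of the forest `F`. -/
def sameTree {V : Type*} (F : V → V → Prop) (u v : V) : Prop :=
  Relation.ReflTransGen (fun a b => F a b ∨ F b a) u v

/-- `F` is a subdivision forest for the network `(V,A)` with leaf set `X`: a spanning
subforest with the same leaf set, all non-forest arcs joining distinct trees of `F`. -/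
def SubdivForest {V : Type*} (A F : V → V → Prop) (X : Set V) : Prop :=
  (∀ u v, F u v → A u v) ∧ IsForest F ∧
    (∀ v, outdeg F v = 0 ↔ v ∈ X) ∧
    (∀ u v, A u v → ¬ F u v → ¬ sameTree F u v)

/-- A network is forest-based if it admits a subdivision forest. -/
def ForestBased {V : Type*} (A : V → V → Prop) (X : Set V) : Prop :=
  ∃ F : V → V → Prop, SubdivForest A F X

/-- `g = γ_v`: `g` is the lowest ancestor of `v` lying in `RH(N) = R(N) ∪ H(N)`
(the vertices of indegree ≠ 1), i.e. the directed path from `g` to `v` passes only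
through tree vertices (indegree 1) after `g`. -/
def isGamma {V : Type*} (A : V → V → Prop) (g v : V) : Prop :=
  indeg A g ≠ 1 ∧ Relation.ReflTransGen (fun a b => A a b ∧ indeg A b = 1) g v

/-- The graph `Γ(N)` on `RH(N)`: `u` and `v` are joined if some hybrid vertex has
parents `u'`, `v'` with `γ_{u'} = u` and `γ_{v'} = v`. -/
def GammaN {V : Type*} (A : V → V → Prop) (u v : V) : Prop :=
  ∃ h u' v', 2 ≤ indeg A h ∧ A u' h ∧ A v' h ∧ u' ≠ v' ∧
    isGamma A u u' ∧ isGamma A v v'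

/-- An omnian: a non-leaf vertex all of whose children are hybrid vertices. -/
def Omnian {V : Type*} (A : V → V → Prop) (v : V) : Prop :=
  outdeg A v ≠ 0 ∧ ∀ c, A v c → 2 ≤ indeg A c

/-- `E` is an omni-extension of `Γ(N)`: a supergraph of `Γ(N)` on the vertex set
`RH(N)` such that every omnian `v` has a child `h` with `{γ_u, h}` an edge of `E`,
where `u` is the other parent of `h`. -/
def OmniExt {V : Type*} (A : V → V → Prop) (E : V → V → Prop) : Prop :=
  Symmetric E ∧ (∀ u v, E u v → indeg A u ≠ 1 ∧ indeg A v ≠ 1) ∧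
    (∀ u v, GammaN A u v → E u v) ∧
    ∀ v, Omnian A v → ∃ h u g, A v h ∧ 2 ≤ indeg A h ∧ A u h ∧ u ≠ v ∧
      isGamma A g u ∧ E g h

/-- Proper forest-based: forest-based with a base forest having exactly as many
component trees (roots of the subdivision forest) as `N` has roots. -/
def ProperFB {V : Type*} (A : V → V → Prop) (X : Set V) : Prop :=
  ∃ F : V → V → Prop, SubdivForest A F X ∧
    {v | indeg F v = 0}.ncard = {v | indeg A v = 0}.ncard

open Relation

section Digraph

variable {V : Type*} {A : V → V → Prop}

lemma exists_ne_arc_of_two_le_indeg {v : V} (hv : 2 ≤ indeg A v) (p : V) :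
    ∃ q, A q v ∧ q ≠ p :=
  Set.exists_ne_of_one_lt_ncard hv p

lemma Acyclic.mono {F : V → V → Prop} (hA : Acyclic A) (hFA : ∀ u v, F u v → A u v) :
    Acyclic F :=
  fun v hv => hA v (TransGen.mono hFA _ _ hv)

variable [Finite V]

lemma indeg_ne_zero_iff {v : V} : indeg A v ≠ 0 ↔ ∃ u, A u v := by
  rw [indeg, Ne, Set.ncard_eq_zero, ← Ne, ← Set.nonempty_iff_ne_empty]
  rfl

lemma indeg_ne_zero_of_arc {u v : V} (h : A u v) : indeg A v ≠ 0 :=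
  indeg_ne_zero_iff.2 ⟨u, h⟩

lemma outdeg_ne_zero_iff {v : V} : outdeg A v ≠ 0 ↔ ∃ u, A v u := by
  rw [outdeg, Ne, Set.ncard_eq_zero, ← Ne, ← Set.nonempty_iff_ne_empty]
  rfl

lemma indeg_le_of_le {F : V → V → Prop} (hFA : ∀ u v, F u v → A u v) (v : V) :
    indeg F v ≤ indeg A v :=
  Set.ncard_le_ncard fun u => hFA u v

lemma outdeg_le_of_le {F : V → V → Prop} (hFA : ∀ u v, F u v → A u v) (v : V) :
    outdeg F v ≤ outdeg A v :=
  Set.ncard_le_ncard fun u => hFA v u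

lemma eq_of_indeg_le_one {u w v : V} (hv : indeg A v ≤ 1) (hu : A u v) (hw : A w v) : u = w :=
  (Set.ncard_le_one).1 hv u hu w hw

lemma eq_or_eq_of_indeg_eq_two {p q r v : V} (hv : indeg A v = 2) (hp : A p v) (hq : A q v)
    (hpq : p ≠ q) (hr : A r v) : r = p ∨ r = q := by
  have hpair : ({p, q} : Set V) = {u | A u v} :=
    Set.eq_of_subset_of_ncard_le (Set.pair_subset hp hq)
      (by rw [Set.ncard_pair hpq]; exact hv.le)
  have hr' : r ∈ ({p, q} : Set V) := hpair ▸ hr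
  simpa using hr'

lemma Acyclic.wellFounded (hA : Acyclic A) : WellFounded (TransGen A) :=
  have : Std.Irrefl (TransGen A) := ⟨hA⟩
  Finite.wellFounded_of_trans_of_irrefl _

end Digraph

section Gamma

variable {V : Type*} {A : V → V → Prop}

lemma isGamma_iff_eq {g v : V} (hv : indeg A v ≠ 1) : isGamma A g v ↔ g = v := by
  refine ⟨fun hg => ?_, by rintro rfl; exact ⟨hv, .refl⟩⟩
  rcases hg.2.cases_tail with h | ⟨c, -, -, hc⟩
  · exact h.symm
  · exact absurd hc hv

variable [Finite V]

lemma isGamma_iff_of_arc {g u v : V} (huv : A u v) (hv : indeg A v = 1) :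
    isGamma A g v ↔ isGamma A g u := by
  refine ⟨fun hg => ?_, fun hg => ⟨hg.1, hg.2.tail ⟨huv, hv⟩⟩⟩
  rcases hg.2.cases_tail with rfl | ⟨c, hgc, hcv, -⟩
  · exact absurd hv hg.1
  · exact ⟨hg.1, eq_of_indeg_le_one hv.le hcv huv ▸ hgc⟩

lemma exists_isGamma (hA : Acyclic A) (v : V) : ∃ g, isGamma A g v := by
  induction v using hA.wellFounded.induction with
  | _ v ih =>
    by_cases hv : indeg A v = 1
    · obtain ⟨u, huv⟩ := indeg_ne_zero_iff.1 (by omega : indeg A v ≠ 0)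
      obtain ⟨g, hg⟩ := ih u (.single huv)
      exact ⟨g, (isGamma_iff_of_arc huv hv).2 hg⟩
    · exact ⟨v, (isGamma_iff_eq hv).2 rfl⟩

lemma isGamma_unique (hA : Acyclic A) {g g' v : V} (hg : isGamma A g v)
    (hg' : isGamma A g' v) : g = g' := by
  induction v using hA.wellFounded.induction with
  | _ v ih =>
    by_cases hv : indeg A v = 1
    · obtain ⟨u, huv⟩ := indeg_ne_zero_iff.1 (by omega : indeg A v ≠ 0)
      rw [isGamma_iff_of_arc huv hv] at hg hg'
      exact ih u (.single huv) hg hg'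
    · rw [isGamma_iff_eq hv] at hg hg'
      rw [hg, hg']

/-- `γ_v`, the lowest ancestor of `v` in `RH(N)`. -/
noncomputable def gammaOf (hA : Acyclic A) (v : V) : V :=
  (exists_isGamma hA v).choose

lemma isGamma_gammaOf (hA : Acyclic A) (v : V) : isGamma A (gammaOf hA v) v :=
  (exists_isGamma hA v).choose_spec

lemma gammaOf_eq (hA : Acyclic A) {g v : V} (h : isGamma A g v) : gammaOf hA v = g :=
  isGamma_unique hA (isGamma_gammaOf hA v) h

lemma gammaOf_of_indeg_ne_one (hA : Acyclic A) {v : V} (hv : indeg A v ≠ 1) :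
    gammaOf hA v = v :=
  gammaOf_eq hA ((isGamma_iff_eq hv).2 rfl)

lemma gammaOf_of_arc (hA : Acyclic A) {u v : V} (huv : A u v) (hv : indeg A v = 1) :
    gammaOf hA v = gammaOf hA u :=
  gammaOf_eq hA ((isGamma_iff_of_arc huv hv).2 (isGamma_gammaOf hA u))

end Gamma

section Forest

variable {V : Type*} {F : V → V → Prop}

lemma sameTree.symm {a b : V} (h : sameTree F a b) : sameTree F b a :=
  have : Std.Symm fun a b => F a b ∨ F b a := ⟨fun _ _ => Or.symm⟩
  Std.Symm.symm (r := ReflTransGen _) _ _ h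

lemma sameTree.apply_eq {α : Type*} {f : V → α} (hf : ∀ a b, F a b → f a = f b) {a b : V}
    (h : sameTree F a b) : f a = f b := by
  induction h with
  | refl => rfl
  | tail _ hxy ih => exact ih.trans (hxy.elim (hf _ _) fun h => (hf _ _ h).symm)

variable [Finite V]

lemma IsForest.existsUnique_root (hF : IsForest F) (v : V) :
    ∃! r, indeg F r = 0 ∧ ReflTransGen F r v := by
  induction v using hF.2.wellFounded.induction with
  | _ v ih =>
    by_cases h0 : indeg F v = 0
    · refine ⟨v, ⟨h0, .refl⟩, fun r ⟨_, hrv⟩ => ?_⟩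
      rcases hrv.cases_tail with h | ⟨c, -, hcv⟩
      · exact h.symm
      · exact absurd h0 (indeg_ne_zero_of_arc hcv)
    · obtain ⟨p, hp⟩ := indeg_ne_zero_iff.1 h0
      obtain ⟨r, ⟨hr0, hrp⟩, hr⟩ := ih p (.single hp)
      refine ⟨r, ⟨hr0, hrp.tail hp⟩, fun r' ⟨hr'0, hr'v⟩ => ?_⟩
      rcases hr'v.cases_tail with rfl | ⟨c, hr'c, hcv⟩
      · exact absurd hr'0 h0
      · exact hr r' ⟨hr'0, eq_of_indeg_le_one (hF.1 v) hcv hp ▸ hr'c⟩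

noncomputable def forestRoot (hF : IsForest F) (v : V) : V :=
  (hF.existsUnique_root v).exists.choose

lemma forestRoot_spec (hF : IsForest F) (v : V) :
    indeg F (forestRoot hF v) = 0 ∧ ReflTransGen F (forestRoot hF v) v :=
  (hF.existsUnique_root v).exists.choose_spec

lemma forestRoot_eq (hF : IsForest F) {r v : V} (hr : indeg F r = 0)
    (hrv : ReflTransGen F r v) : forestRoot hF v = r :=
  (hF.existsUnique_root v).unique (forestRoot_spec hF v) ⟨hr, hrv⟩

lemma forestRoot_of_indeg_eq_zero (hF : IsForest F) {v : V} (hv : indeg F v = 0) :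
    forestRoot hF v = v :=
  forestRoot_eq hF hv .refl

lemma forestRoot_of_arc (hF : IsForest F) {u v : V} (huv : F u v) :
    forestRoot hF v = forestRoot hF u :=
  forestRoot_eq hF (forestRoot_spec hF u).1 ((forestRoot_spec hF u).2.tail huv)

lemma sameTree_of_forestRoot_eq (hF : IsForest F) {a b : V}
    (h : forestRoot hF a = forestRoot hF b) : sameTree F a b := by
  have tree_of_root (v : V) : sameTree F (forestRoot hF v) v :=
    ReflTransGen.mono (fun _ _ => Or.inl) _ _ (forestRoot_spec hF v).2
  exact (tree_of_root a).symm.trans (h ▸ tree_of_root b)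

lemma reflTransGen_of_forestRoot_eq (hF : IsForest F) {r v : V} (hr : indeg F r = 0)
    (hv : forestRoot hF v = r) :
    ReflTransGen (fun a b => F a b ∧ forestRoot hF b = r) r v := by
  have hrv := hv ▸ (forestRoot_spec hF v).2
  induction hrv with
  | refl => exact .refl
  | tail hrx hxy ih =>
    exact (ih (forestRoot_eq hF hr hrx)).tail ⟨hxy, forestRoot_eq hF hr (hrx.tail hxy)⟩

end Forest

lemma exists_fin_coloring_of_retraction {α : Type*} {R : Set α} [Finite R] {m : ℕ}
    (hR : R.ncard = m) (ρ : α → α) (hρR : ∀ a, ρ a ∈ R) (hρ : ∀ a ∈ R, ρ a = a) :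
    ∃ σ : α → Fin m, (∀ a b, σ a = σ b ↔ ρ a = ρ b) ∧ Set.BijOn σ R Set.univ := by
  let e : R ≃ Fin m := Finite.equivFinOfCardEq (by rwa [Nat.card_coe_set_eq])
  have hσ (a b : α) : e ⟨ρ a, hρR a⟩ = e ⟨ρ b, hρR b⟩ ↔ ρ a = ρ b :=
    e.apply_eq_iff_eq.trans Subtype.ext_iff
  refine ⟨fun a => e ⟨ρ a, hρR a⟩, hσ, fun _ _ => Set.mem_univ _, fun a ha b hb hab => ?_,
    fun c _ => ⟨e.symm c, (e.symm c).2, ?_⟩⟩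
  · rwa [hσ, hρ a ha, hρ b hb] at hab
  · simp only [hρ _ (e.symm c).2, Subtype.coe_eta, Equiv.apply_symm_apply]

section ForestToColoring

variable {V : Type*} [Finite V] {A F : V → V → Prop} {X : Set V}

lemma indeg_eq_zero_iff_of_ncard_eq (hFA : ∀ u v, F u v → A u v)
    (hcount : {v | indeg F v = 0}.ncard = {v | indeg A v = 0}.ncard) (v : V) :
    indeg F v = 0 ↔ indeg A v = 0 := by
  have hsub : {v | indeg A v = 0} ⊆ {v | indeg F v = 0} := fun v (hv : indeg A v = 0) =>
    Nat.eq_zero_of_le_zero (hv ▸ indeg_le_of_le hFA v)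
  exact (Set.ext_iff.1 (Set.eq_of_subset_of_ncard_le hsub hcount.le) v).symm

lemma exists_forest_parent (hroot : ∀ v, indeg F v = 0 ↔ indeg A v = 0) {v : V}
    (hv : indeg A v ≠ 0) : ∃ p, F p v :=
  indeg_ne_zero_iff.1 ((hroot v).not.2 hv)

lemma forest_arc_of_indeg_eq_one (hS : SubdivForest A F X)
    (hroot : ∀ v, indeg F v = 0 ↔ indeg A v = 0) {u v : V} (huv : A u v)
    (hv : indeg A v = 1) : F u v := by
  obtain ⟨p, hp⟩ := exists_forest_parent hroot (by omega : indeg A v ≠ 0)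
  rwa [eq_of_indeg_le_one hv.le huv (hS.1 p v hp)]

lemma forestRoot_eq_of_isGamma (hS : SubdivForest A F X)
    (hroot : ∀ v, indeg F v = 0 ↔ indeg A v = 0) {g v : V} (hg : isGamma A g v) :
    forestRoot hS.2.1 v = forestRoot hS.2.1 g := by
  obtain ⟨-, hgv⟩ := hg
  induction hgv with
  | refl => rfl
  | tail _ hxy ih =>
    rw [forestRoot_of_arc hS.2.1 (forest_arc_of_indeg_eq_one hS hroot hxy.1 hxy.2), ih]

lemma forestRoot_ne_of_other_parent (hS : SubdivForest A F X) {p q v : V} (hp : F p v)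
    (hq : A q v) (hqp : q ≠ p) : forestRoot hS.2.1 q ≠ forestRoot hS.2.1 v := fun h =>
  hS.2.2.2 q v hq (fun hqF => hqp (eq_of_indeg_le_one (hS.2.1.1 v) hqF hp))
    (sameTree_of_forestRoot_eq hS.2.1 h)

lemma forestRoot_ne_of_hybrid (hS : SubdivForest A F X)
    (hroot : ∀ v, indeg F v = 0 ↔ indeg A v = 0) {u v h : V} (hh : indeg A h = 2)
    (hu : A u h) (hv : A v h) (huv : u ≠ v) : forestRoot hS.2.1 u ≠ forestRoot hS.2.1 v := by
  obtain ⟨p, hp⟩ := exists_forest_parent hroot (by omega : indeg A h ≠ 0)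
  rcases eq_or_eq_of_indeg_eq_two hh hu hv huv (hS.1 p h hp) with rfl | rfl
  · rw [← forestRoot_of_arc hS.2.1 hp]
    exact (forestRoot_ne_of_other_parent hS hp hv huv.symm).symm
  · rw [← forestRoot_of_arc hS.2.1 hp]
    exact forestRoot_ne_of_other_parent hS hp hu huv

lemma omniExt_of_subdivForest (hnet : IsNetwork A X) (hS : SubdivForest A F X)
    (hroot : ∀ v, indeg F v = 0 ↔ indeg A v = 0) :
    OmniExt A fun u v =>
      indeg A u ≠ 1 ∧ indeg A v ≠ 1 ∧ forestRoot hS.2.1 u ≠ forestRoot hS.2.1 v := by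
  refine ⟨fun u v h => ⟨h.2.1, h.1, h.2.2.symm⟩, fun u v h => ⟨h.1, h.2.1⟩, ?_, ?_⟩
  · rintro u v ⟨h, u', v', hh, hu', hv', huv', hgu, hgv⟩
    refine ⟨hgu.1, hgv.1, ?_⟩
    rw [← forestRoot_eq_of_isGamma hS hroot hgu, ← forestRoot_eq_of_isGamma hS hroot hgv]
    exact forestRoot_ne_of_hybrid hS hroot (hnet.semibinary h hh).1 hu' hv' huv'
  · rintro v ⟨hv, hchild⟩
    obtain ⟨h, hvh⟩ :=
      outdeg_ne_zero_iff.1 fun h0 => hv ((hnet.leaves v).2 ((hS.2.2.1 v).1 h0))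
    have hh := hchild h (hS.1 v h hvh)
    obtain ⟨u, hu, huv⟩ := exists_ne_arc_of_two_le_indeg hh v
    obtain ⟨g, hg⟩ := exists_isGamma hnet.acyclic u
    refine ⟨h, u, g, hS.1 v h hvh, hh, hu, huv, hg, hg.1, by omega, ?_⟩
    rw [← forestRoot_eq_of_isGamma hS hroot hg]
    exact forestRoot_ne_of_other_parent hS hvh hu huv

lemma exists_omniExt_coloring_of_subdivForest {m : ℕ} (hnet : IsNetwork A X)
    (hroots : {v | indeg A v = 0}.ncard = m) (hS : SubdivForest A F X)
    (hcount : {v | indeg F v = 0}.ncard = {v | indeg A v = 0}.ncard) :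
    ∃ E : V → V → Prop, OmniExt A E ∧
      ∃ σ : V → Fin m,
        (∀ u v, E u v → σ u ≠ σ v) ∧
        Set.BijOn σ {v | indeg A v = 0} Set.univ ∧
        (∀ u v, indeg A u = 0 → 2 ≤ indeg A v → σ u = σ v →
          ReflTransGen (fun a b => A a b ∧ (2 ≤ indeg A b → σ b = σ u)) u v) := by
  have hroot := indeg_eq_zero_iff_of_ncard_eq hS.1 hcount
  have hρ (v : V) (hv : indeg A v = 0) : forestRoot hS.2.1 v = v :=
    forestRoot_of_indeg_eq_zero _ ((hroot v).2 hv)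
  obtain ⟨σ, hσ, hbij⟩ := exists_fin_coloring_of_retraction hroots (forestRoot hS.2.1)
    (fun v => (hroot _).1 (forestRoot_spec _ v).1) hρ
  refine ⟨_, omniExt_of_subdivForest hnet hS hroot, σ, fun u v huv => (hσ u v).not.2 huv.2.2,
    hbij, fun u v hu _ huv => ?_⟩
  have hvu : forestRoot hS.2.1 v = u := by rw [← (hσ u v).1 huv, hρ u hu]
  refine ReflTransGen.mono (fun a b hab => ⟨hS.1 a b hab.1, fun _ => ?_⟩) _ _
    (reflTransGen_of_forestRoot_eq hS.2.1 ((hroot u).2 hu) hvu)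
  rw [hσ, hab.2, hρ u hu]

end ForestToColoring

section ColoringToForest

variable {V : Type*} [Finite V] {A : V → V → Prop} {X : Set V} {C : Type*}

def colorForest (hA : Acyclic A) (σ : V → C) : V → V → Prop :=
  fun a b => A a b ∧ (indeg A b = 1 ∨ (2 ≤ indeg A b ∧ σ (gammaOf hA a) = σ b))

lemma color_gammaOf_eq_of_reflTransGen (hA : Acyclic A) (σ : V → C) {r w : V}
    (hr : indeg A r = 0)
    (hrw : ReflTransGen (fun a b => A a b ∧ (2 ≤ indeg A b → σ b = σ r)) r w) :
    σ (gammaOf hA w) = σ r := by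
  induction hrw with
  | refl => rw [gammaOf_of_indeg_ne_one hA (by omega)]
  | @tail b c _ hbc ih =>
    by_cases hc : indeg A c = 1
    · rw [gammaOf_of_arc hA hbc.1 hc, ih]
    · have := indeg_ne_zero_of_arc hbc.1
      rw [gammaOf_of_indeg_ne_one hA hc, hbc.2 (by omega)]

lemma exists_parent_color_gammaOf_eq (hA : Acyclic A) (σ : V → C)
    (hsurj : Set.SurjOn σ {v | indeg A v = 0} Set.univ)
    (hC2 : ∀ u v, indeg A u = 0 → 2 ≤ indeg A v → σ u = σ v →
      ReflTransGen (fun a b => A a b ∧ (2 ≤ indeg A b → σ b = σ u)) u v)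
    {h : V} (hh : 2 ≤ indeg A h) : ∃ p, A p h ∧ σ (gammaOf hA p) = σ h := by
  obtain ⟨r, hr, hrh⟩ := hsurj (Set.mem_univ (σ h))
  rcases (hC2 r h hr hh hrh).cases_tail with rfl | ⟨p, hrp, hph, -⟩
  · exact absurd (show indeg A h = 0 from hr) (by omega)
  · exact ⟨p, hph, by rw [color_gammaOf_eq_of_reflTransGen hA σ hr hrp, hrh]⟩

lemma color_gammaOf_eq_of_colorForest (hA : Acyclic A) (σ : V → C) {a b : V}
    (hab : colorForest hA σ a b) : σ (gammaOf hA a) = σ (gammaOf hA b) := by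
  rcases hab with ⟨hab, hb | ⟨hb, hσ⟩⟩
  · rw [gammaOf_of_arc hA hab hb]
  · rw [gammaOf_of_indeg_ne_one hA (v := b) (by omega), hσ]

lemma isForest_colorForest (hA : Acyclic A) (σ : V → C)
    (hΓ : ∀ u v, GammaN A u v → σ u ≠ σ v) : IsForest (colorForest hA σ) := by
  refine ⟨fun v => (Set.ncard_le_one).2 fun p ⟨hp, hpv⟩ q ⟨hq, hqv⟩ => ?_,
    hA.mono fun _ _ => And.left⟩
  rcases hpv with hv | ⟨hv, hpσ⟩
  · exact eq_of_indeg_le_one hv.le hp hq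
  · rcases hqv with hv' | ⟨-, hqσ⟩
    · omega
    · by_contra hpq
      exact hΓ _ _ ⟨v, p, q, hv, hp, hq, hpq, isGamma_gammaOf hA p, isGamma_gammaOf hA q⟩
        (hpσ.trans hqσ.symm)

lemma indeg_colorForest_eq_zero_iff (hA : Acyclic A) (σ : V → C)
    (hparent : ∀ h, 2 ≤ indeg A h → ∃ p, A p h ∧ σ (gammaOf hA p) = σ h) (v : V) :
    indeg (colorForest hA σ) v = 0 ↔ indeg A v = 0 := by
  refine ⟨fun hv => ?_,
    fun hv => Nat.eq_zero_of_le_zero (hv ▸ indeg_le_of_le (fun _ _ => And.left) v)⟩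
  by_contra hv0
  refine indeg_ne_zero_iff.2 ?_ hv
  by_cases hv1 : indeg A v = 1
  · obtain ⟨p, hp⟩ := indeg_ne_zero_iff.1 hv0
    exact ⟨p, hp, .inl hv1⟩
  · obtain ⟨p, hp, hpσ⟩ := hparent v (by omega)
    exact ⟨p, hp, .inr ⟨by omega, hpσ⟩⟩

lemma outdeg_colorForest_eq_zero_iff (hnet : IsNetwork A X) (σ : V → C)
    (hparent : ∀ h, 2 ≤ indeg A h → ∃ p, A p h ∧ σ (gammaOf hnet.acyclic p) = σ h)
    (homni : ∀ v, Omnian A v → ∃ h u, A v h ∧ 2 ≤ indeg A h ∧ A u h ∧ u ≠ v ∧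
      σ (gammaOf hnet.acyclic u) ≠ σ h) (v : V) :
    outdeg (colorForest hnet.acyclic σ) v = 0 ↔ v ∈ X := by
  refine ⟨fun hv => ?_, fun hv => Nat.eq_zero_of_le_zero
    ((hnet.leaves v).2 hv ▸ outdeg_le_of_le (fun _ _ => And.left) v)⟩
  by_contra hvX
  have hnone (c : V) : ¬ colorForest hnet.acyclic σ v c := fun hc =>
    outdeg_ne_zero_iff.2 ⟨c, hc⟩ hv
  have homnian : Omnian A v := by
    refine ⟨fun h0 => hvX ((hnet.leaves v).1 h0), fun c hc => ?_⟩
    have := indeg_ne_zero_of_arc hc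
    by_contra hc2
    exact hnone c ⟨hc, .inl (by omega)⟩
  obtain ⟨h, u, hvh, hh, huh, huv, hσu⟩ := homni v homnian
  obtain ⟨p, hph, hpσ⟩ := hparent h hh
  rcases eq_or_eq_of_indeg_eq_two (hnet.semibinary h hh).1 huh hvh huv hph with rfl | rfl
  · exact hσu hpσ
  · exact hnone h ⟨hvh, .inr ⟨hh, hpσ⟩⟩

lemma not_sameTree_colorForest (hA : Acyclic A) (σ : V → C) {u v : V} (huv : A u v)
    (hnot : ¬ colorForest hA σ u v) : ¬ sameTree (colorForest hA σ) u v := fun hsame => by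
  have hv1 : indeg A v ≠ 1 := fun hv1 => hnot ⟨huv, .inl hv1⟩
  have hσ := hsame.apply_eq (f := fun a => σ (gammaOf hA a))
    fun _ _ => color_gammaOf_eq_of_colorForest hA σ
  have := indeg_ne_zero_of_arc huv
  rw [gammaOf_of_indeg_ne_one hA hv1] at hσ
  exact hnot ⟨huv, .inr ⟨by omega, hσ⟩⟩

lemma properFB_of_omniExt_coloring {E : V → V → Prop} (hnet : IsNetwork A X)
    (hE : OmniExt A E) (σ : V → C) (hσE : ∀ u v, E u v → σ u ≠ σ v)
    (hsurj : Set.SurjOn σ {v | indeg A v = 0} Set.univ)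
    (hC2 : ∀ u v, indeg A u = 0 → 2 ≤ indeg A v → σ u = σ v →
      ReflTransGen (fun a b => A a b ∧ (2 ≤ indeg A b → σ b = σ u)) u v) :
    ProperFB A X := by
  have hparent h (hh : 2 ≤ indeg A h) :=
    exists_parent_color_gammaOf_eq hnet.acyclic σ hsurj hC2 hh
  have homni (v : V) (hv : Omnian A v) : ∃ h u, A v h ∧ 2 ≤ indeg A h ∧ A u h ∧ u ≠ v ∧
      σ (gammaOf hnet.acyclic u) ≠ σ h := by
    obtain ⟨h, u, g, hvh, hh, huh, huv, hg, hgh⟩ := hE.2.2.2 v hv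
    exact ⟨h, u, hvh, hh, huh, huv, gammaOf_eq hnet.acyclic hg ▸ hσE g h hgh⟩
  refine ⟨colorForest hnet.acyclic σ, ⟨fun _ _ => And.left,
    isForest_colorForest _ σ fun u v huv => hσE u v (hE.2.2.1 u v huv),
    outdeg_colorForest_eq_zero_iff hnet σ hparent homni,
    fun _ _ => not_sameTree_colorForest _ σ⟩, ?_⟩
  simp only [indeg_colorForest_eq_zero_iff _ σ hparent]

end ColoringToForest

theorem stmt13_general {V : Type*} [Fintype V] (A : V → V → Prop) (X : Set V) (m : ℕ)
    (hnet : IsNetwork A X)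
    (hroots : {v | indeg A v = 0}.ncard = m) :
    ProperFB A X ↔
      ∃ E : V → V → Prop, OmniExt A E ∧
        ∃ σ : V → Fin m,
          (∀ u v, E u v → σ u ≠ σ v) ∧
          Set.BijOn σ {v | indeg A v = 0} Set.univ ∧
          (∀ u v, indeg A u = 0 → 2 ≤ indeg A v → σ u = σ v →
            Relation.ReflTransGen
              (fun a b => A a b ∧ (2 ≤ indeg A b → σ b = σ u)) u v) := by
  constructor
  · rintro ⟨F, hS, hcount⟩
    exact exists_omniExt_coloring_of_subdivForest hnet hroots hS hcount
  · rintro ⟨E, hE, σ, hσE, hbij, hC2⟩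
    exact properFB_of_omniExt_coloring hnet hE σ hσE hbij.surjOn hC2

/-- an `m`-rooted network (`m ≥ 2`) is proper forest-based iff some
omni-extension of `Γ(N)` has a proper vertex coloring `σ` with `m` colors such that
(C1) `σ` restricted to the roots is a bijection onto the colors, and (C2) whenever a
root `u` and hybrid vertex `v` get the same color, there is a directed path from `u`
to `v` all of whose hybrid vertices are colored `σ u`. -/
theorem stmt13 {V : Type*} [Fintype V] (A : V → V → Prop) (X : Set V) (m : ℕ)
    (hm : 2 ≤ m) (hnet : IsNetwork A X)
    (hroots : {v | indeg A v = 0}.ncard = m) :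
    ProperFB A X ↔
      ∃ E : V → V → Prop, OmniExt A E ∧
        ∃ σ : V → Fin m,
          (∀ u v, E u v → σ u ≠ σ v) ∧
          Set.BijOn σ {v | indeg A v = 0} Set.univ ∧
          (∀ u v, indeg A u = 0 → 2 ≤ indeg A v → σ u = σ v →
            Relation.ReflTransGen
              (fun a b => A a b ∧ (2 ≤ indeg A b → σ b = σ u)) u v) :=
  stmt13_general A X m hnet hroots
end

section
/- Let N be an m-rooted network on X (m ≥ 2) that is forest-based. If |X| = m then every base forest of N is proper (has exactly m component trees), and hence N is proper forest-based; if |X| > m then N has a base forest that is not proper. -/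
open Classical

/-!
Pruning a base forest so that every non-leaf keeps exactly one child gives again a base forest,
now a disjoint union of paths; its roots correspond to its leaves, so it has `|X|` trees.
Deleting arcs only creates roots, and every root of `N` is a root of any base forest, so
`m ≤ #roots F ≤ |X|` for every base forest `F`.
-/

section Degrees

variable {V : Type*} [Finite V]

lemma outdeg_eq_zero_iff (G : V → V → Prop) (v : V) : outdeg G v = 0 ↔ ∀ u, ¬ G v u := by
  rw [outdeg, Set.ncard_eq_zero, Set.eq_empty_iff_forall_notMem]
  rfl

lemma indeg_eq_zero_iff (G : V → V → Prop) (v : V) : indeg G v = 0 ↔ ∀ u, ¬ G u v := by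
  rw [indeg, Set.ncard_eq_zero, Set.eq_empty_iff_forall_notMem]
  rfl

lemma leftUnique_of_indeg_le_one {G : V → V → Prop} (h : ∀ v, indeg G v ≤ 1) :
    Relator.LeftUnique G :=
  fun a b c ha hb => (Set.ncard_le_one (Set.toFinite _)).mp (h c) a ha b hb

lemma ncard_indeg_eq_zero_le_of_le {G H : V → V → Prop} (hHG : ∀ u v, H u v → G u v) :
    {v | indeg G v = 0}.ncard ≤ {v | indeg H v = 0}.ncard := by
  refine Set.ncard_le_ncard (fun v hv => ?_)
  simp only [Set.mem_ofPred_eq, indeg_eq_zero_iff] at hv ⊢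
  exact fun u hu => hv u (hHG u v hu)

lemma ncard_indeg_eq_zero_eq_ncard_outdeg_eq_zero {G : V → V → Prop}
    (hin : ∀ v, indeg G v ≤ 1) (hout : Relator.RightUnique G) :
    {v | indeg G v = 0}.ncard = {v | outdeg G v = 0}.ncard := by
  -- the arcs biject with the non-leaves via their tails and with the non-roots via their heads
  set E : Set (V × V) := {p | G p.1 p.2}
  have hfst : Prod.fst '' E = {v | outdeg G v = 0}ᶜ := by
    ext v
    simp [E, outdeg_eq_zero_iff]
  have hsnd : Prod.snd '' E = {v | indeg G v = 0}ᶜ := by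
    ext v
    simp [E, indeg_eq_zero_iff]
  have hinj_fst : Set.InjOn Prod.fst E := by
    rintro ⟨a, b⟩ (hab : G a b) ⟨a', b'⟩ (hab' : G a' b') (rfl : a = a')
    rw [hout hab hab']
  have hinj_snd : Set.InjOn Prod.snd E := by
    rintro ⟨a, b⟩ (hab : G a b) ⟨a', b'⟩ (hab' : G a' b') (rfl : b = b')
    rw [leftUnique_of_indeg_le_one hin hab hab']
  have hcompl : {v | indeg G v = 0}ᶜ.ncard = {v | outdeg G v = 0}ᶜ.ncard := by
    rw [← hfst, ← hsnd, hinj_fst.ncard_image, hinj_snd.ncard_image]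
  have h₁ := Set.ncard_add_ncard_compl {v | indeg G v = 0}
  have h₂ := Set.ncard_add_ncard_compl {v | outdeg G v = 0}
  omega

lemma reflTransGen_or_reflTransGen_of_sameTree {G : V → V → Prop}
    (hin : ∀ v, indeg G v ≤ 1) (hout : Relator.RightUnique G) {u v : V}
    (h : sameTree G u v) :
    Relation.ReflTransGen G u v ∨ Relation.ReflTransGen G v u := by
  induction h with
  | refl => exact Or.inl .refl
  | @tail b c _ hstep ih =>
    rcases hstep with hbc | hcb
    · rcases ih with h | h
      · exact Or.inl (h.tail hbc)
      · rcases h.cases_head with rfl | ⟨d, hbd, hdu⟩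
        · exact Or.inl (.single hbc)
        · rw [hout hbd hbc] at hdu
          exact Or.inr hdu
    · rcases ih with h | h
      · rcases h.cases_tail with rfl | ⟨p, hup, hpb⟩
        · exact Or.inr (.single hcb)
        · rw [leftUnique_of_indeg_le_one hin hpb hcb] at hup
          exact Or.inl hup
      · exact Or.inr (.head hcb h)

end Degrees

section Pruning

variable {V : Type*} {F : V → V → Prop} {c : V → V}

def prunedForest (F : V → V → Prop) (c : V → V) : V → V → Prop := fun u v => F u v ∧ c u = v

lemma prunedForest_rightUnique : Relator.RightUnique (prunedForest F c) :=
  fun _ _ _ hb hb' => hb.2.symm.trans hb'.2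

lemma exists_child_choice (F : V → V → Prop) : ∃ c : V → V, ∀ u w, F u w → F u (c u) := by
  refine ⟨fun u => if h : ∃ w, F u w then h.choose else u, fun u w huw => ?_⟩
  dsimp only
  rw [dif_pos ⟨w, huw⟩]
  exact Exists.choose_spec _

variable [Finite V]

lemma outdeg_prunedForest_eq_zero_iff (hc : ∀ u w, F u w → F u (c u)) (v : V) :
    outdeg (prunedForest F c) v = 0 ↔ outdeg F v = 0 := by
  simp only [outdeg_eq_zero_iff, prunedForest, not_and]
  exact ⟨fun h w hw => h (c v) (hc v w hw) rfl, fun h w hw => absurd hw (h w)⟩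

lemma indeg_prunedForest_le_one (hin : ∀ v, indeg F v ≤ 1) (v : V) :
    indeg (prunedForest F c) v ≤ 1 :=
  (Set.ncard_le_ncard fun _ hu => hu.1).trans (hin v)

lemma ncard_indeg_prunedForest_eq_zero (hin : ∀ v, indeg F v ≤ 1)
    (hc : ∀ u w, F u w → F u (c u)) :
    {v | indeg (prunedForest F c) v = 0}.ncard = {v | outdeg F v = 0}.ncard := by
  rw [ncard_indeg_eq_zero_eq_ncard_outdeg_eq_zero (indeg_prunedForest_le_one hin)
    prunedForest_rightUnique]
  simp only [outdeg_prunedForest_eq_zero_iff hc]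

end Pruning

namespace SubdivForest

variable {V : Type*} [Finite V] {A F : V → V → Prop} {X : Set V}

lemma ncard_indeg_eq_zero_le (hF : SubdivForest A F X) :
    {v | indeg A v = 0}.ncard ≤ {v | indeg F v = 0}.ncard :=
  ncard_indeg_eq_zero_le_of_le hF.1

lemma prunedForest (hF : SubdivForest A F X) {c : V → V} (hc : ∀ u w, F u w → F u (c u)) :
    SubdivForest A (prunedForest F c) X := by
  obtain ⟨hFA, ⟨hin, hacyc⟩, hleaf, hcross⟩ := hF
  have hle : ∀ u v, _root_.prunedForest F c u v → F u v := fun _ _ h => h.1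
  refine ⟨fun u v h => hFA u v h.1, ⟨indeg_prunedForest_le_one hin,
    fun v hv => hacyc v (Relation.TransGen.mono hle _ _ hv)⟩,
    fun v => (outdeg_prunedForest_eq_zero_iff hc v).trans (hleaf v), ?_⟩
  intro u v hA hnot hsame
  by_cases hFuv : F u v
  · -- a pruned path from `v` to `u` closes a cycle with `F u v`; one from `u` to `v` forces `c u = v`
    rcases reflTransGen_or_reflTransGen_of_sameTree (indeg_prunedForest_le_one hin)
      prunedForest_rightUnique hsame with h | h
    · rcases h.cases_tail with rfl | ⟨p, _, hpv⟩
      · exact hacyc _ (.single hFuv)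
      · exact hnot (leftUnique_of_indeg_le_one hin hpv.1 hFuv ▸ hpv)
    · exact hacyc u (.head' hFuv (Relation.ReflTransGen.mono hle _ _ h))
  · exact hcross u v hA hFuv
      (Relation.ReflTransGen.mono (fun a b hab => hab.imp (hle a b) (hle b a)) _ _ hsame)

lemma exists_le_ncard_indeg_eq_zero_eq (hF : SubdivForest A F X) :
    ∃ F' : V → V → Prop, (∀ u v, F' u v → F u v) ∧ SubdivForest A F' X ∧
      {v | indeg F' v = 0}.ncard = X.ncard := by
  obtain ⟨c, hc⟩ := exists_child_choice F
  refine ⟨_root_.prunedForest F c, fun _ _ h => h.1, hF.prunedForest hc, ?_⟩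
  exact (ncard_indeg_prunedForest_eq_zero hF.2.1.1 hc).trans (congrArg _ (Set.ext hF.2.2.1))

lemma ncard_indeg_eq_zero_le_ncard (hF : SubdivForest A F X) :
    {v | indeg F v = 0}.ncard ≤ X.ncard := by
  obtain ⟨F', hle, -, hcard⟩ := hF.exists_le_ncard_indeg_eq_zero_eq
  exact hcard ▸ ncard_indeg_eq_zero_le_of_le hle

end SubdivForest

theorem stmt17_general {V : Type*} [Fintype V] (A : V → V → Prop) (X : Set V) (m : ℕ)
    (hroots : {v | indeg A v = 0}.ncard = m) (hfb : ForestBased A X) :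
    (X.ncard = m →
      (∀ F : V → V → Prop, SubdivForest A F X → {v | indeg F v = 0}.ncard = m) ∧
        ∃ F : V → V → Prop, SubdivForest A F X ∧ {v | indeg F v = 0}.ncard = m) ∧
    (m < X.ncard →
      ∃ F : V → V → Prop, SubdivForest A F X ∧ {v | indeg F v = 0}.ncard ≠ m) := by
  obtain ⟨F₀, hF₀⟩ := hfb
  have proper : X.ncard = m → ∀ F, SubdivForest A F X → {v | indeg F v = 0}.ncard = m :=
    fun hX F hF => le_antisymm (hX ▸ hF.ncard_indeg_eq_zero_le_ncard)
      (hroots ▸ hF.ncard_indeg_eq_zero_le)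
  refine ⟨fun hX => ⟨proper hX, F₀, hF₀, proper hX F₀ hF₀⟩, fun hX => ?_⟩
  obtain ⟨F, -, hF, hcard⟩ := hF₀.exists_le_ncard_indeg_eq_zero_eq
  exact ⟨F, hF, hcard ▸ hX.ne'⟩

/-- let `N` be a forest-based `m`-rooted network (`m ≥ 2`). The number
of component trees of a base forest equals the number of roots of the corresponding
subdivision forest. If `|X| = m` then every base forest is proper (has exactly `m`
trees) and `N` is proper forest-based; if `|X| > m` then some base forest of `N` is
not proper. -/
theorem stmt17 {V : Type*} [Fintype V] (A : V → V → Prop) (X : Set V) (m : ℕ)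
    (hm : 2 ≤ m) (hnet : IsNetwork A X)
    (hroots : {v | indeg A v = 0}.ncard = m) (hfb : ForestBased A X) :
    (X.ncard = m →
      (∀ F : V → V → Prop, SubdivForest A F X → {v | indeg F v = 0}.ncard = m) ∧
        ∃ F : V → V → Prop, SubdivForest A F X ∧ {v | indeg F v = 0}.ncard = m) ∧
    (m < X.ncard →
      ∃ F : V → V → Prop, SubdivForest A F X ∧ {v | indeg F v = 0}.ncard ≠ m) :=
  stmt17_general A X m hroots hfb
end
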